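/- Let y : ℝ³ × ℝ → ℝ³ be twice continuously differentiable, let ∇y denote the spatial Jacobian and cof M := (adjugate M)ᵀ the cofactor matrix, and let ε denote the Levi–Civita symbol on {1,2,3}. Then at every point and for all indices i, α ∈ {1,2,3}: ∂/∂t [(cof ∇y)_{i α}] = Σ_{k,l,m,n=1}^{3} ε_{α k l} ∂/∂x_k [ ε_{i m n} (∂y_m/∂t)(∂y_n/∂x_l) ], i.e. ∂ₜ cof ∇y = ∇ × (∂ₜ y × ∇y) in the paper's matrix curl and cross-product conventions. -/

import Mathlib

open Matrix
open scoped BigOperators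

/-- The Levi–Civita symbol on `{1,2,3}` (zero-based indices): `eps i j k` is
the sign of the permutation `(i,j,k)` of `(0,1,2)` and `0` otherwise. -/
noncomputable def eps (i j k : Fin 3) : ℝ :=
  (((j.val : ℝ) - (i.val : ℝ)) * ((k.val : ℝ) - (i.val : ℝ))
    * ((k.val : ℝ) - (j.val : ℝ))) / 2

/-!
With `(cof M)_{iα} = ½ ε_{ijk} ε_{αβγ} M_{jβ} M_{kγ}`, the product rule and the symmetry of this
expression under `(j, β) ↔ (k, γ)` give `∂ₜ (cof ∇y)_{iα} = ε_{ijk} ε_{αβγ} ∂ₜ(∂_β y_j) ∂_γ y_k`,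
and `∂ₜ ∂_β y_j = ∂_β v_j` by equality of mixed partials. Expanding the curl on the right by the
product rule gives, after renaming indices, the same sum plus `ε_{αkl} ε_{imn} v_m ∂_k ∂_l y_n`,
which vanishes because the Hessian of `y_n` is symmetric in `k, l` while `ε_{αkl}` is
antisymmetric.
-/

theorem eps_swap (i j k : Fin 3) : eps i k j = -eps i j k := by
  unfold eps; ring

theorem sum_eps_mul_eq_zero_of_symm (α : Fin 3) {T : Fin 3 → Fin 3 → ℝ}
    (hT : ∀ k l, T k l = T l k) : ∑ k, ∑ l, eps α k l * T k l = 0 := by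
  have h : ∑ k, ∑ l, eps α k l * T k l = -∑ k, ∑ l, eps α k l * T k l := by
    conv_lhs => rw [Finset.sum_comm]
    simp only [← Finset.sum_neg_distrib]
    exact Finset.sum_congr rfl fun k _ => Finset.sum_congr rfl fun l _ => by
      rw [eps_swap, hT]; ring
  linarith

theorem adjugate_fin_three_apply_eq_sum_eps (M : Matrix (Fin 3) (Fin 3) ℝ) (i α : Fin 3) :
    M.adjugate α i = (1 / 2 : ℝ) * ∑ j, ∑ k, ∑ β, ∑ γ,
      eps i j k * eps α β γ * (M j β * M k γ) := by
  fin_cases i <;> fin_cases α <;>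
    · simp [Matrix.adjugate_fin_three, Fin.sum_univ_three, eps]
      ring

theorem sum_eps_mul_eps_mul_comm (i α : Fin 3) (A B : Matrix (Fin 3) (Fin 3) ℝ) :
    ∑ j, ∑ k, ∑ β, ∑ γ, eps i j k * eps α β γ * (A j β * B k γ)
      = ∑ j, ∑ k, ∑ β, ∑ γ, eps i j k * eps α β γ * (B j β * A k γ) := by
  rw [Finset.sum_comm]
  refine Finset.sum_congr rfl fun k _ => Finset.sum_congr rfl fun j _ => ?_
  rw [Finset.sum_comm]
  refine Finset.sum_congr rfl fun γ _ => Finset.sum_congr rfl fun β _ => ?_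
  rw [eps_swap i j k, eps_swap α β γ]
  ring

theorem hasDerivAt_adjugate_fin_three_apply {M : ℝ → Matrix (Fin 3) (Fin 3) ℝ}
    {M' : Matrix (Fin 3) (Fin 3) ℝ} {t : ℝ} (hM : ∀ j β, HasDerivAt (fun s => M s j β) (M' j β) t)
    (i α : Fin 3) :
    HasDerivAt (fun s => (M s).adjugate α i)
      (∑ j, ∑ k, ∑ β, ∑ γ, eps i j k * eps α β γ * (M' j β * M t k γ)) t := by
  simp only [adjugate_fin_three_apply_eq_sum_eps]
  have hprod : HasDerivAt
      (fun s => ∑ j, ∑ k, ∑ β, ∑ γ, eps i j k * eps α β γ * (M s j β * M s k γ))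
      (∑ j, ∑ k, ∑ β, ∑ γ, eps i j k * eps α β γ * (M' j β * M t k γ + M t j β * M' k γ)) t :=
    HasDerivAt.fun_sum fun j _ => HasDerivAt.fun_sum fun k _ => HasDerivAt.fun_sum fun β _ =>
      HasDerivAt.fun_sum fun γ _ => ((hM j β).mul (hM k γ)).const_mul _
  refine (hprod.const_mul (1 / 2 : ℝ)).congr_deriv ?_
  simp only [mul_add, Finset.sum_add_distrib]
  rw [sum_eps_mul_eps_mul_comm i α (M t) M']
  ring

theorem sum_eps_mul_eps_eq_sum_curl (i α : Fin 3) (S A : Matrix (Fin 3) (Fin 3) ℝ)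
    (V : Fin 3 → ℝ) {T : Fin 3 → Fin 3 → Fin 3 → ℝ} (hT : ∀ n k l, T n k l = T n l k) :
    ∑ j, ∑ k, ∑ β, ∑ γ, eps i j k * eps α β γ * (S j β * A k γ)
      = ∑ k, ∑ l, ∑ m, ∑ n, eps α k l * (eps i m n * (S m k * A n l + V m * T n k l)) := by
  have hzero : ∑ k, ∑ l, ∑ m, ∑ n, eps α k l * (eps i m n * (V m * T n k l)) = 0 := by
    simpa only [Finset.mul_sum] using sum_eps_mul_eq_zero_of_symm α
      (T := fun k l => ∑ m, ∑ n, eps i m n * (V m * T n k l)) fun k l => by simp only [hT _ k l]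
  simp only [mul_add, Finset.sum_add_distrib, hzero, add_zero]
  calc ∑ j, ∑ k, ∑ β, ∑ γ, eps i j k * eps α β γ * (S j β * A k γ)
      = ∑ j, ∑ β, ∑ k, ∑ γ, eps i j k * eps α β γ * (S j β * A k γ) :=
        Finset.sum_congr rfl fun j _ => Finset.sum_comm
    _ = ∑ β, ∑ j, ∑ γ, ∑ k, eps i j k * eps α β γ * (S j β * A k γ) := by
        rw [Finset.sum_comm]
        exact Finset.sum_congr rfl fun β _ => Finset.sum_congr rfl fun j _ => Finset.sum_comm
    _ = ∑ β, ∑ γ, ∑ j, ∑ k, eps α β γ * (eps i j k * (S j β * A k γ)) := by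
        refine Finset.sum_congr rfl fun β _ => ?_
        rw [Finset.sum_comm]
        simp only [mul_comm (eps i _ _), mul_assoc]

section Partials

variable {E F : Type*} [NormedAddCommGroup E] [NormedSpace ℝ E]
  [NormedAddCommGroup F] [NormedSpace ℝ F]

theorem fderiv_comp_prodMk_left_apply {f : E × ℝ → F} {z : E} {s : ℝ}
    (hf : DifferentiableAt ℝ f (z, s)) (u : E) :
    fderiv ℝ (fun w => f (w, s)) z u = fderiv ℝ f (z, s) (u, 0) := by
  have h : HasFDerivAt (fun w => f (w, s)) ((fderiv ℝ f (z, s)).comp (.inl ℝ E ℝ)) z :=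
    hf.hasFDerivAt.comp z (hasFDerivAt_prodMk_left z s)
  simp [h.fderiv]

theorem hasDerivAt_comp_prodMk_right {f : E × ℝ → F} {z : E} {s : ℝ}
    (hf : DifferentiableAt ℝ f (z, s)) :
    HasDerivAt (fun r => f (z, r)) (fderiv ℝ f (z, s) (0, 1)) s :=
  hf.hasFDerivAt.comp_hasDerivAt s ((hasDerivAt_const s z).prodMk (hasDerivAt_id s))

theorem fderiv_fderiv_apply {f : E → F} {x : E} (hf : DifferentiableAt ℝ (fderiv ℝ f) x)
    (u w : E) : fderiv ℝ (fun z => fderiv ℝ f z w) x u = fderiv ℝ (fderiv ℝ f) x u w := by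
  simp [fderiv_clm_apply hf (differentiableAt_const w)]

theorem ContDiff.differentiable_fderiv {f : E → F} (hf : ContDiff ℝ 2 f) :
    Differentiable ℝ (fderiv ℝ f) :=
  (hf.fderiv_right (m := 1) (by norm_num)).differentiable (by norm_num)

theorem ContDiff.fderiv_fderiv_apply_comm {f : E → F} (hf : ContDiff ℝ 2 f) (x u w : E) :
    fderiv ℝ (fun z => fderiv ℝ f z w) x u = fderiv ℝ (fun z => fderiv ℝ f z u) x w := by
  rw [fderiv_fderiv_apply (hf.differentiable_fderiv x),
    fderiv_fderiv_apply (hf.differentiable_fderiv x), hf.contDiffAt.isSymmSndFDerivAt (by simp)]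

theorem ContDiff.differentiable_fderiv_apply {f : E → F} (hf : ContDiff ℝ 2 f) (u : E) :
    Differentiable ℝ fun z => fderiv ℝ f z u :=
  hf.differentiable_fderiv.clm_apply (differentiable_const u)

theorem ContDiff.deriv_comp_prodMk_right_eq {f : E × ℝ → F} (hf : ContDiff ℝ 2 f) (t : ℝ) :
    (fun w => deriv (fun s => f (w, s)) t) = fun w => fderiv ℝ f (w, t) (0, 1) :=
  funext fun w => (hasDerivAt_comp_prodMk_right (hf.differentiable (by norm_num) _)).deriv

theorem ContDiff.hasDerivAt_fderiv_comp_prodMk_left {f : E × ℝ → F} (hf : ContDiff ℝ 2 f)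
    (z u : E) (t : ℝ) :
    HasDerivAt (fun s => fderiv ℝ (fun w => f (w, s)) z u)
      (fderiv ℝ (fun w => deriv (fun s => f (w, s)) t) z u) t := by
  have hslice : (fun s => fderiv ℝ (fun w => f (w, s)) z u) = fun s => fderiv ℝ f (z, s) (u, 0) :=
    funext fun s => fderiv_comp_prodMk_left_apply (hf.differentiable (by norm_num) _) u
  rw [hslice, hf.deriv_comp_prodMk_right_eq,
    fderiv_comp_prodMk_left_apply (hf.differentiable_fderiv_apply _ _),
    fderiv_fderiv_apply (hf.differentiable_fderiv _), hf.contDiffAt.isSymmSndFDerivAt (by simp),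
    ← fderiv_fderiv_apply (hf.differentiable_fderiv _)]
  exact hasDerivAt_comp_prodMk_right (hf.differentiable_fderiv_apply _ _)

theorem ContDiff.differentiable_deriv_comp_prodMk_right {f : E × ℝ → F} (hf : ContDiff ℝ 2 f)
    (t : ℝ) : Differentiable ℝ fun w => deriv (fun s => f (w, s)) t := by
  rw [hf.deriv_comp_prodMk_right_eq]
  exact fun w => (hf.differentiable_fderiv_apply _ _).comp w
    ((hasFDerivAt_prodMk_left w t).differentiableAt)

theorem fderiv_const_mul_mul_apply {a b : E → ℝ} {x : E} (ha : DifferentiableAt ℝ a x)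
    (hb : DifferentiableAt ℝ b x) (c : ℝ) (u : E) :
    fderiv ℝ (fun z => c * a z * b z) x u = c * (fderiv ℝ a x u * b x + a x * fderiv ℝ b x u) := by
  have h : HasFDerivAt (fun z => c * a z * b z)
      ((c * a x) • fderiv ℝ b x + b x • c • fderiv ℝ a x) x :=
    (ha.hasFDerivAt.const_mul c).mul hb.hasFDerivAt
  simp only [h.fderiv, _root_.add_apply, _root_.smul_apply, smul_eq_mul]
  ring

end Partials

/-- **Qin's conservation law for the cofactor matrix.**
Let `y : ℝ³ × ℝ → ℝ³` be `C²`, `J z t` its spatial Jacobian, `v z t = ∂ₜ y`,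
and `cof M = (adjugate M)ᵀ`. Then, in the paper's matrix curl and vector-matrix
cross-product conventions, `∂ₜ cof ∇y = ∇ × (∂ₜ y × ∇y)`:
`∂ₜ (cof ∇y)_{iα} = Σ_{k,l,m,n} ε_{αkl} ∂/∂x_k [ ε_{imn} (∂ₜy_m)(∂y_n/∂x_l) ]`. -/
theorem cofactor_conservation_law
    (y : (Fin 3 → ℝ) → ℝ → (Fin 3 → ℝ))
    (hy : ContDiff ℝ 2 (fun p : (Fin 3 → ℝ) × ℝ => y p.1 p.2))
    (J : (Fin 3 → ℝ) → ℝ → Matrix (Fin 3) (Fin 3) ℝ)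
    (hJ : ∀ z t i α, J z t i α = fderiv ℝ (fun w => y w t) z (Pi.single α 1) i)
    (v : (Fin 3 → ℝ) → ℝ → (Fin 3 → ℝ))
    (hv : ∀ z t i, v z t i = deriv (fun s => y z s i) t)
    (x : Fin 3 → ℝ) (t : ℝ) (i α : Fin 3) :
    deriv (fun s => ((J x s).adjugate)ᵀ i α) t
      = ∑ k, ∑ l, ∑ m, ∑ n',
          eps α k l *
            fderiv ℝ (fun z => eps i m n' * v z t m * J z t n' l) x
              (Pi.single k 1) := by
  have hy_apply (n : Fin 3) : ContDiff ℝ 2 fun p : (Fin 3 → ℝ) × ℝ => y p.1 p.2 n :=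
    contDiff_pi.mp hy n
  have hy_slice (s : ℝ) (n : Fin 3) : ContDiff ℝ 2 fun w => y w s n :=
    (hy_apply n).comp (contDiff_id.prodMk contDiff_const)
  have hJ_apply (z : Fin 3 → ℝ) (s : ℝ) (n l : Fin 3) :
      J z s n l = fderiv ℝ (fun w => y w s n) z (Pi.single l 1) := by
    rw [hJ, fderiv_apply (contDiff_pi.mpr (hy_slice s) |>.differentiable (by norm_num) z)]
    rfl
  have hv_diff (m : Fin 3) : DifferentiableAt ℝ (fun z => v z t m) x := by
    simp only [hv]
    exact (hy_apply m).differentiable_deriv_comp_prodMk_right t x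
  have hJ_diff (n l : Fin 3) : DifferentiableAt ℝ (fun z => J z t n l) x := by
    simp only [hJ_apply]
    exact (hy_slice t n).differentiable_fderiv_apply _ x
  have hJ_hess_symm (n k l : Fin 3) : fderiv ℝ (fun z => J z t n l) x (Pi.single k 1)
      = fderiv ℝ (fun z => J z t n k) x (Pi.single l 1) := by
    simp only [hJ_apply]
    exact (hy_slice t n).fderiv_fderiv_apply_comm x _ _
  have hJ_dt (n l : Fin 3) :
      HasDerivAt (fun s => J x s n l) (fderiv ℝ (fun z => v z t n) x (Pi.single l 1)) t := by
    simp only [hJ_apply, hv]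
    exact (hy_apply n).hasDerivAt_fderiv_comp_prodMk_left x _ t
  simp only [transpose_apply, (hasDerivAt_adjugate_fin_three_apply hJ_dt i α).deriv,
    fderiv_const_mul_mul_apply (hv_diff _) (hJ_diff _ _)]
  exact sum_eps_mul_eps_eq_sum_curl i α _ (J x t) (fun m => v x t m) hJ_hess_symm
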